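/- Let α₀ > 0 be irrational. If the irrationality base satisfies θ(α₀) > Δ(α₀) (as extended reals), then Δ is not differentiable at α₀. -/

import Mathlib

open Filter
open scoped ENNReal

/-- The digit sequence `u_α`: with `b = ⌈α⌉`, `u_α n = (b−1) + ⌈(α−b+1)(n+1)⌉ − ⌈(α−b+1)n⌉`,
the upper mechanical word of slope `α − b + 1` written over the alphabet `{b−1, b}`. -/
noncomputable def upperWord (α : ℝ) (n : ℕ) : ℤ :=
  (⌈α⌉ - 1) + (⌈(α - ⌈α⌉ + 1) * ((n : ℝ) + 1)⌉ - ⌈(α - ⌈α⌉ + 1) * (n : ℝ)⌉)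

/-- `Δ` is the devil's staircase function: `Δ 0 = 1` and, for each `α > 0`, `Δ α` is the
unique real `β > 1` satisfying `∑_{n=0}^∞ u_α(n)·β^{−(n+1)} = 1`. -/
def IsDevilStaircase (Δ : ℝ → ℝ) : Prop :=
  Δ 0 = 1 ∧ ∀ α : ℝ, 0 < α →
    (1 < Δ α ∧ ∑' n : ℕ, (upperWord α n : ℝ) / (Δ α) ^ (n + 1) = 1) ∧
    ∀ β : ℝ, 1 < β → (∑' n : ℕ, (upperWord α n : ℝ) / β ^ (n + 1) = 1) → β = Δ α

/-- `‖x‖`: the distance from `x` to the nearest integer. -/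
noncomputable def distNearestInt (x : ℝ) : ℝ := |x - round x|

/-- The irrationality base `θ(α) = sup {λ ≥ 1 : liminf_q λ^q‖qα‖/q = 0}`,
the supremum taken in the extended reals `[1, ∞]`. -/
noncomputable def irrationalityBase (α : ℝ) : ℝ≥0∞ :=
  sSup (ENNReal.ofReal ''
    {l : ℝ | 1 ≤ l ∧
      liminf (fun q : ℕ => ((l ^ q * distNearestInt (q * α) / q : ℝ) : EReal)) atTop = 0})

/-!
Write `F_α(x) = ∑ u_α(n) xⁿ⁺¹`, so that `F_α(1/Δ(α)) = 1`, and let `b = ⌈α⌉`, `σ = α - b + 1`.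
Summation by parts gives `F_α(x) = (b - 1) x/(1-x) + (1 - x) ∑ ⌈σ n⌉ xⁿ`, so for `u < v` with
`⌈u⌉ = ⌈v⌉` and an integer strictly between `qu` and `qv` we get `F_v(x) ≥ F_u(x) + (1 - x) x^q`.
The coefficients of `F_v` lie in `[0, b]`, so `F_v` increases by at most `b (y/(1-y) - x/(1-x))`
from `x` to `y`; at `x = 1/Δ(v)`, `y = 1/Δ(u)` this reads `b (1/(Δ(u)-1) - 1/(Δ(v)-1))`. Together
these give `Δ(v) - Δ(u) ≥ κ Δ(u)^(-q)`, with `κ > 0` uniform while `Δ(u)` stays away from `1`.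

If `Δ(α₀) < l < θ(α₀)`, infinitely many `q` have `‖qα₀‖ < q l^(-q)`. Reflecting `α₀` in the
nearest fraction `p/q` yields `x` with `|x - α₀| < 2 l^(-q)` and `p` strictly between `qα₀` and
`qx`, hence `|Δ(x) - Δ(α₀)| ≥ κ Δ(α₀)^(-q)`: the difference quotients grow like `(l/Δ(α₀))^q`.
-/

open Topology

lemma upperWord_nonneg {α : ℝ} (hα : 0 < α) (n : ℕ) : 0 ≤ upperWord α n := by
  have hb : 1 ≤ ⌈α⌉ := Int.one_le_ceil_iff.mpr hα
  have hmono : ⌈(α - ⌈α⌉ + 1) * (n : ℝ)⌉ ≤ ⌈(α - ⌈α⌉ + 1) * ((n : ℝ) + 1)⌉ :=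
    Int.ceil_le_ceil (by nlinarith [Int.ceil_lt_add_one α])
  unfold upperWord
  omega

lemma upperWord_le_ceil (α : ℝ) (n : ℕ) : upperWord α n ≤ ⌈α⌉ := by
  have hstep : ⌈(α - ⌈α⌉ + 1) * ((n : ℝ) + 1)⌉ ≤ ⌈(α - ⌈α⌉ + 1) * (n : ℝ)⌉ + 1 := by
    rw [← Int.ceil_add_one]
    exact Int.ceil_le_ceil (by nlinarith [Int.le_ceil α])
  unfold upperWord
  omega

lemma hasSum_pow_succ {x : ℝ} (hx₀ : 0 ≤ x) (hx₁ : x < 1) :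
    HasSum (fun n : ℕ => x ^ (n + 1)) (x / (1 - x)) := by
  simpa [pow_succ', div_eq_mul_inv] using (hasSum_geometric_of_lt_one hx₀ hx₁).mul_left x

lemma HasSum.sub_mul_pow_succ {c : ℕ → ℝ} {x s : ℝ} (hc : c 0 = 0)
    (h : HasSum (fun n => c n * x ^ n) s) :
    HasSum (fun n => (c (n + 1) - c n) * x ^ (n + 1)) ((1 - x) * s) := by
  have hshift : HasSum (fun n => c (n + 1) * x ^ (n + 1)) s := by
    simpa [hc] using (hasSum_nat_add_iff' 1).mpr h
  have hmul : HasSum (fun n => c n * x ^ (n + 1)) (x * s) := by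
    simpa [pow_succ, mul_assoc, mul_comm, mul_left_comm] using h.mul_left x
  rw [show (1 - x) * s = s - x * s by ring]
  simpa only [sub_mul] using hshift.sub hmul

noncomputable def ceilSeries (σ x : ℝ) : ℝ := ∑' n : ℕ, (⌈σ * n⌉ : ℝ) * x ^ n

lemma summable_ceil_mul_mul_pow {σ x : ℝ} (hσ₀ : 0 ≤ σ) (hσ₁ : σ ≤ 1) (hx₀ : 0 ≤ x)
    (hx₁ : x < 1) :
    Summable fun n : ℕ => (⌈σ * n⌉ : ℝ) * x ^ n := by
  refine Summable.of_nonneg_of_le (fun n => ?_) (fun n => ?_)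
    (summable_pow_mul_geometric_of_norm_lt_one 1 (by rwa [Real.norm_of_nonneg hx₀]))
  · exact mul_nonneg (by exact_mod_cast Int.ceil_nonneg (by positivity)) (pow_nonneg hx₀ n)
  · have : (⌈σ * n⌉ : ℝ) ≤ n := by
      exact_mod_cast Int.ceil_le.mpr (by push_cast; nlinarith [(n.cast_nonneg : (0 : ℝ) ≤ n)])
    simpa using mul_le_mul_of_nonneg_right this (pow_nonneg hx₀ n)

lemma ceilSeries_add_pow_le {σ τ x : ℝ} {q : ℕ} (hσ₀ : 0 ≤ σ) (hστ : σ ≤ τ) (hτ₁ : τ ≤ 1)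
    (hx₀ : 0 ≤ x) (hx₁ : x < 1) (hq : ⌈σ * q⌉ < ⌈τ * q⌉) :
    ceilSeries σ x + x ^ q ≤ ceilSeries τ x := by
  have hσ := summable_ceil_mul_mul_pow hσ₀ (hστ.trans hτ₁) hx₀ hx₁
  have hτ := summable_ceil_mul_mul_pow (hσ₀.trans hστ) hτ₁ hx₀ hx₁
  have hterm (n : ℕ) : 0 ≤ (⌈τ * n⌉ : ℝ) * x ^ n - ⌈σ * n⌉ * x ^ n := by
    have := Int.ceil_le_ceil (mul_le_mul_of_nonneg_right hστ n.cast_nonneg)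
    rw [← sub_mul]
    exact mul_nonneg (sub_nonneg.mpr (by exact_mod_cast this)) (pow_nonneg hx₀ n)
  have hgap : x ^ q ≤ (⌈τ * q⌉ : ℝ) * x ^ q - ⌈σ * q⌉ * x ^ q := by
    rw [← sub_mul]
    refine le_mul_of_one_le_left (pow_nonneg hx₀ q) ?_
    rw [le_sub_iff_add_le']
    exact_mod_cast Int.add_one_le_of_lt hq
  have := hgap.trans ((hτ.sub hσ).le_tsum q fun n _ => hterm n)
  rw [Summable.tsum_sub hτ hσ] at this
  unfold ceilSeries
  linarith

noncomputable def upperWordSeries (α x : ℝ) : ℝ := ∑' n : ℕ, (upperWord α n : ℝ) * x ^ (n + 1)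

section upperWordSeries

variable {α x y : ℝ}

lemma upperWordSeries_eq (hx₀ : 0 ≤ x) (hx₁ : x < 1) :
    upperWordSeries α x =
      (⌈α⌉ - 1) * (x / (1 - x)) + (1 - x) * ceilSeries (α - ⌈α⌉ + 1) x := by
  have hσ₀ : 0 ≤ α - ⌈α⌉ + 1 := by linarith [Int.ceil_lt_add_one α]
  have hσ₁ : α - ⌈α⌉ + 1 ≤ 1 := by linarith [Int.le_ceil α]
  have hceil := (summable_ceil_mul_mul_pow hσ₀ hσ₁ hx₀ hx₁).hasSum.sub_mul_pow_succ (by simp)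
  rw [ceilSeries, ← (((hasSum_pow_succ hx₀ hx₁).mul_left _).add hceil).tsum_eq, upperWordSeries]
  congr 1 with n
  unfold upperWord
  push_cast
  ring

lemma summable_upperWord_mul_pow (hα : 0 < α) (hx₀ : 0 ≤ x) (hx₁ : x < 1) :
    Summable fun n : ℕ => (upperWord α n : ℝ) * x ^ (n + 1) :=
  Summable.of_nonneg_of_le
    (fun n => mul_nonneg (by exact_mod_cast upperWord_nonneg hα n) (pow_nonneg hx₀ _))
    (fun n => mul_le_mul_of_nonneg_right (Int.cast_le.mpr (upperWord_le_ceil α n))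
      (pow_nonneg hx₀ _))
    ((hasSum_pow_succ hx₀ hx₁).summable.mul_left _)

lemma upperWordSeries_le_upperWordSeries (hα : 0 < α) (hx₀ : 0 ≤ x) (hxy : x ≤ y)
    (hy₁ : y < 1) :
    upperWordSeries α x ≤ upperWordSeries α y :=
  hasSum_le (fun n => mul_le_mul_of_nonneg_left (pow_le_pow_left₀ hx₀ hxy _)
      (by exact_mod_cast upperWord_nonneg hα n))
    (summable_upperWord_mul_pow hα hx₀ (hxy.trans_lt hy₁)).hasSum
    (summable_upperWord_mul_pow hα (hx₀.trans hxy) hy₁).hasSum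

lemma upperWordSeries_sub_le (hα : 0 < α) (hx₀ : 0 ≤ x) (hxy : x ≤ y) (hy₁ : y < 1) :
    upperWordSeries α y - upperWordSeries α x ≤ ⌈α⌉ * (y / (1 - y) - x / (1 - x)) := by
  have hx₁ := hxy.trans_lt hy₁
  have hy₀ := hx₀.trans hxy
  rw [mul_sub]
  refine hasSum_le (fun n => ?_)
    ((summable_upperWord_mul_pow hα hy₀ hy₁).hasSum.sub
      (summable_upperWord_mul_pow hα hx₀ hx₁).hasSum)
    (((hasSum_pow_succ hy₀ hy₁).mul_left _).sub ((hasSum_pow_succ hx₀ hx₁).mul_left _))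
  simp only [← mul_sub]
  exact mul_le_mul_of_nonneg_right (by exact_mod_cast upperWord_le_ceil α n)
    (sub_nonneg.mpr (pow_le_pow_left₀ hx₀ hxy _))

lemma upperWordSeries_add_le {u v : ℝ} {q : ℕ} {m : ℤ} (hc : ⌈u⌉ = ⌈v⌉) (hum : u * q < m)
    (hmv : m < v * q) (hx₀ : 0 ≤ x) (hx₁ : x < 1) :
    upperWordSeries u x + (1 - x) * x ^ q ≤ upperWordSeries v x := by
  have huv : u ≤ v := (lt_of_mul_lt_mul_right (hum.trans hmv) q.cast_nonneg).le
  have hceil : ⌈(u - ⌈u⌉ + 1) * q⌉ < ⌈(v - ⌈v⌉ + 1) * q⌉ := by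
    have hle : ⌈(u - ⌈u⌉ + 1) * q⌉ ≤ m - (⌈u⌉ - 1) * q :=
      Int.ceil_le.mpr (by push_cast; linarith)
    have hlt : m - (⌈u⌉ - 1) * q < ⌈(v - ⌈v⌉ + 1) * q⌉ :=
      Int.lt_ceil.mpr (by push_cast; rw [hc]; linarith)
    exact hle.trans_lt hlt
  have hseries := ceilSeries_add_pow_le (by linarith [Int.ceil_lt_add_one u])
    (by rw [hc]; linarith) (by linarith [Int.le_ceil v]) hx₀ hx₁ hceil
  rw [upperWordSeries_eq hx₀ hx₁, upperWordSeries_eq hx₀ hx₁, hc]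
  rw [hc] at hseries
  linarith [mul_le_mul_of_nonneg_left hseries (sub_nonneg.mpr hx₁.le)]

end upperWordSeries

lemma Irrational.eventually_ceil_eq {α : ℝ} (h : Irrational α) : ∀ᶠ x in 𝓝 α, ⌈x⌉ = ⌈α⌉ := by
  have hlt : α < ⌈α⌉ := (Int.le_ceil α).lt_of_ne (h.ne_int _)
  have hgt : (⌈α⌉ : ℝ) - 1 < α := by linarith [Int.ceil_lt_add_one α]
  filter_upwards [Ioo_mem_nhds hgt hlt] with x hx
  exact Int.ceil_eq_on_Ioc _ _ (Set.Ioo_subset_Ioc_self hx)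

namespace IsDevilStaircase

variable {Δ : ℝ → ℝ} {α u v γ : ℝ} {q : ℕ} {m : ℤ}

lemma one_lt (hΔ : IsDevilStaircase Δ) (hα : 0 < α) : 1 < Δ α := (hΔ.2 α hα).1.1

lemma upperWordSeries_inv (hΔ : IsDevilStaircase Δ) (hα : 0 < α) :
    upperWordSeries α (Δ α)⁻¹ = 1 := by
  rw [upperWordSeries, ← (hΔ.2 α hα).1.2]
  congr 1 with n
  rw [inv_pow, div_eq_mul_inv]

lemma lt_and_pow_le (hΔ : IsDevilStaircase Δ) (hu : 0 < u) (hc : ⌈u⌉ = ⌈v⌉)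
    (hum : u * q < m) (hmv : m < v * q) :
    Δ u < Δ v ∧ (1 - (Δ u)⁻¹) * (Δ u)⁻¹ ^ q ≤ ⌈u⌉ * ((Δ u - 1)⁻¹ - (Δ v - 1)⁻¹) := by
  have hv : 0 < v := hu.trans (lt_of_mul_lt_mul_right (hum.trans hmv) q.cast_nonneg)
  have hβu := hΔ.one_lt hu
  have hβv := hΔ.one_lt hv
  have hxu₀ : 0 ≤ (Δ u)⁻¹ := by positivity
  have hxu₁ : (Δ u)⁻¹ < 1 := inv_lt_one_of_one_lt₀ hβu
  have hxv₀ : 0 ≤ (Δ v)⁻¹ := by positivity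
  have hxv₁ : (Δ v)⁻¹ < 1 := inv_lt_one_of_one_lt₀ hβv
  have hgain := upperWordSeries_add_le hc hum hmv hxu₀ hxu₁
  rw [hΔ.upperWordSeries_inv hu] at hgain
  have hpos : 0 < (1 - (Δ u)⁻¹) * (Δ u)⁻¹ ^ q := by
    have := sub_pos.mpr hxu₁
    positivity
  have hinv : (Δ v)⁻¹ < (Δ u)⁻¹ := by
    by_contra! hle
    have := upperWordSeries_le_upperWordSeries hv hxu₀ hle hxv₁
    rw [hΔ.upperWordSeries_inv hv] at this
    linarith
  refine ⟨(inv_lt_inv₀ (by linarith) (by linarith)).mp hinv, ?_⟩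
  have hlip := upperWordSeries_sub_le hv hxv₀ hinv.le hxu₁
  rw [hΔ.upperWordSeries_inv hv, ← hc] at hlip
  have hgeom (β : ℝ) (hβ : 1 < β) : β⁻¹ / (1 - β⁻¹) = (β - 1)⁻¹ := by
    field_simp
  rw [hgeom _ hβu, hgeom _ hβv] at hlip
  linarith

lemma pow_le_sub (hΔ : IsDevilStaircase Δ) (hu : 0 < u) (hc : ⌈u⌉ = ⌈v⌉)
    (hum : u * q < m) (hmv : m < v * q) (hγ : 1 < γ) (hγu : γ ≤ Δ u) :
    (1 - γ⁻¹) * (γ - 1) ^ 2 / ⌈u⌉ * (Δ u)⁻¹ ^ q ≤ Δ v - Δ u := by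
  obtain ⟨hlt, hle⟩ := hΔ.lt_and_pow_le hu hc hum hmv
  have hβu := hΔ.one_lt hu
  have hb : (0 : ℝ) < ⌈u⌉ := by exact_mod_cast Int.ceil_pos.mpr hu
  have hfactor : (1 - γ⁻¹) * (Δ u)⁻¹ ^ q ≤ (1 - (Δ u)⁻¹) * (Δ u)⁻¹ ^ q := by
    gcongr
  have hdiff : (Δ u - 1)⁻¹ - (Δ v - 1)⁻¹ ≤ (Δ v - Δ u) / (γ - 1) ^ 2 := by
    rw [inv_sub_inv (by linarith) (by linarith), sub_sub_sub_cancel_right, sq]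
    gcongr
    linarith
  have key : (1 - γ⁻¹) * (Δ u)⁻¹ ^ q ≤ ⌈u⌉ * ((Δ v - Δ u) / (γ - 1) ^ 2) :=
    hfactor.trans (hle.trans (by gcongr))
  have hγ' : 0 < (γ - 1) ^ 2 := pow_pos (sub_pos.mpr hγ) 2
  rw [div_mul_eq_mul_div, div_le_iff₀ hb]
  rw [mul_div_assoc', le_div_iff₀ hγ'] at key
  linarith

lemma exists_pow_le_abs_sub (hΔ : IsDevilStaircase Δ) (hα : 0 < α) (hirr : Irrational α)
    (hcont : ContinuousAt Δ α) :
    ∃ κ > 0, ∀ᶠ x : ℝ in 𝓝 α, ∀ (q : ℕ) (m : ℤ),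
      (α * q < m ∧ m < x * q ∨ x * q < m ∧ m < α * q) → κ * (Δ α)⁻¹ ^ q ≤ |Δ x - Δ α| := by
  obtain ⟨γ, hγ, hγα⟩ := exists_between (hΔ.one_lt hα)
  have hκ : 0 < (1 - γ⁻¹) * (γ - 1) ^ 2 / ⌈α⌉ := by
    have := inv_lt_one_of_one_lt₀ hγ
    have : (0 : ℝ) < ⌈α⌉ := by exact_mod_cast Int.ceil_pos.mpr hα
    have : (0 : ℝ) < γ - 1 := by linarith
    positivity
  refine ⟨_, hκ, ?_⟩
  filter_upwards [eventually_gt_nhds hα, hirr.eventually_ceil_eq,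
    hcont.eventually (lt_mem_nhds hγα)] with x hx hc hγx q m hm
  rcases hm with ⟨hαm, hmx⟩ | ⟨hxm, hmα⟩
  · exact (hΔ.pow_le_sub hα hc.symm hαm hmx hγ hγα.le).trans (le_abs_self _)
  · have hlt := (hΔ.lt_and_pow_le hx hc hxm hmα).1
    have hjump := hΔ.pow_le_sub hx hc hxm hmα hγ hγx.le
    rw [hc] at hjump
    rw [abs_sub_comm]
    refine le_trans ?_ (hjump.trans (le_abs_self _))
    have := hΔ.one_lt hx
    have := hΔ.one_lt hα
    gcongr

end IsDevilStaircase

lemma Irrational.exists_int_between_natCast_mul {α : ℝ} (h : Irrational α) {q : ℕ} (hq : 0 < q) :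
    ∃ (x : ℝ) (m : ℤ), |x - α| = 2 * distNearestInt (q * α) / q ∧
      (α * q < m ∧ m < x * q ∨ x * q < m ∧ m < α * q) := by
  set p := round (q * α)
  have hqR : (0 : ℝ) < q := by exact_mod_cast hq
  refine ⟨2 * p / q - α, p, ?_, ?_⟩
  · rw [distNearestInt, show 2 * (p : ℝ) / q - α - α = 2 * (p - q * α) / q by field_simp; ring,
      abs_div, abs_mul, abs_of_pos hqR, abs_sub_comm, abs_two]
  · have hxq : (2 * p / q - α) * q = 2 * p - α * q := by field_simp
    rw [hxq]
    have hne : α * q ≠ p := by rw [mul_comm]; exact (h.natCast_mul hq.ne').ne_int p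
    rcases hne.lt_or_gt with hlt | hgt
    · left; constructor <;> linarith
    · right; constructor <;> linarith

lemma exists_lt_frequently_of_lt_irrationalityBase {α β : ℝ}
    (h : ENNReal.ofReal β < irrationalityBase α) :
    ∃ l, β < l ∧ ∃ᶠ q : ℕ in atTop, l ^ q * distNearestInt (q * α) < q := by
  obtain ⟨_, ⟨l, ⟨hl, hliminf⟩, rfl⟩, hβl⟩ := lt_sSup_iff.mp h
  refine ⟨l, (ENNReal.ofReal_lt_ofReal_iff (by linarith)).mp hβl, ?_⟩
  have hfreq := frequently_lt_of_liminf_lt (by isBoundedDefault) (hliminf.trans_lt zero_lt_one)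
  refine (hfreq.and_eventually (eventually_gt_atTop 0)).mono fun q ⟨hlt, hq⟩ => ?_
  rw [← div_lt_one (by exact_mod_cast hq)]
  exact_mod_cast hlt

lemma eventually_mul_pow_lt_mul_pow {a b C κ : ℝ} (ha : 0 ≤ a) (hab : a < b) (hκ : 0 < κ) :
    ∀ᶠ n : ℕ in atTop, C * a ^ n < κ * b ^ n := by
  filter_upwards [((isLittleO_pow_pow_of_lt_left ha hab).const_mul_left C).bound (half_pos hκ)]
    with n hn
  have hb : 0 < b ^ n := pow_pos (ha.trans_lt hab) n
  rw [Real.norm_eq_abs, Real.norm_of_nonneg hb.le] at hn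
  linarith [le_abs_self (C * a ^ n), mul_pos hκ hb]

/-- If `α₀ > 0` is irrational and `θ(α₀) > Δ(α₀)`, then `Δ` is not differentiable at `α₀`. -/
theorem devilStaircase_not_differentiable (Δ : ℝ → ℝ) (hΔ : IsDevilStaircase Δ)
    (α₀ : ℝ) (h0 : 0 < α₀) (hirr : Irrational α₀)
    (hθ : ENNReal.ofReal (Δ α₀) < irrationalityBase α₀) :
    ¬ DifferentiableAt ℝ Δ α₀ := by
  intro hdiff
  have hβ := hΔ.one_lt h0
  obtain ⟨l, hβl, hfreq⟩ := exists_lt_frequently_of_lt_irrationalityBase hθ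
  obtain ⟨κ, hκ, hjump⟩ := hΔ.exists_pow_le_abs_sub h0 hirr hdiff.continuousAt
  obtain ⟨K, hK, hbig⟩ := hdiff.hasDerivAt.isBigO_sub.exists_pos
  obtain ⟨ε, hε, hnear⟩ := Metric.eventually_nhds_iff.mp (hbig.bound.and hjump)
  have hl₀ : 0 ≤ l⁻¹ := inv_nonneg.mpr (by linarith)
  have hlβ : l⁻¹ < (Δ α₀)⁻¹ := inv_strictAnti₀ (by linarith) hβl
  obtain ⟨q, hlq, hqε, hqK⟩ := (hfreq.and_eventually
    ((eventually_mul_pow_lt_mul_pow (C := 2) hl₀ (hlβ.trans (inv_lt_one_of_one_lt₀ hβ)) hε).and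
      (eventually_mul_pow_lt_mul_pow (C := 2 * K) hl₀ hlβ hκ))).exists
  have hlq₀ : 0 < l ^ q := pow_pos (by linarith) q
  have hq : (0 : ℝ) < q := lt_of_le_of_lt (mul_nonneg hlq₀.le (abs_nonneg _)) hlq
  obtain ⟨x, m, hxα, hm⟩ := hirr.exists_int_between_natCast_mul (Nat.cast_pos.mp hq)
  have hclose : |x - α₀| < 2 * l⁻¹ ^ q := by
    rw [hxα, div_lt_iff₀ hq, inv_pow, mul_assoc, inv_mul_eq_div, mul_lt_mul_iff_right₀ two_pos,
      lt_div_iff₀ hlq₀]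
    linarith
  obtain ⟨hlip, hgap⟩ := hnear (y := x) (by rw [Real.dist_eq]; simpa using hclose.trans hqε)
  simp only [Real.norm_eq_abs] at hlip
  -- `|Δ x - Δ α₀| ≤ K |x - α₀| < 2K l^(-q) < κ Δ(α₀)^(-q) ≤ |Δ x - Δ α₀|`
  linarith [hgap q m hm, mul_lt_mul_of_pos_left hclose hK]
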